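/- (Corollary 1, Unique fixed point) Assume β_pl ≠ 0 and β_op ≠ 0. There exists a unique V* : S → ℝ such that (B_pl V*)(s) = V*(s) for all s ∈ S. -/

import Mathlib

/-!
The entropy terms of the free energy do not involve `V`, so `f(π,σ,s,V) - f(π,σ,s,W)` is a
`π ⊗ σ ⊗ T`-average of `γ (V - W)` and is bounded by `γ ‖V - W‖∞`. The free energy is continuous,
hence bounded, on the compact simplices, and `sSup`/`sInf` of bounded families are `1`-Lipschitz
in the sup norm; so `B_pl` is a `γ`-contraction of `S → ℝ` and Banach's theorem applies.
-/

noncomputable section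

/-- The probability simplex over a finite type `X`. -/
def simplex (X : Type*) [Fintype X] : Set (X → ℝ) :=
  {p | (∀ x, 0 ≤ p x) ∧ ∑ x, p x = 1}

variable {S A B : Type*} [Fintype S] [Fintype A] [Fintype B]

/-- The free energy `f(π, σ, s, V)` of the two-player soft stochastic game: expected
one-step reward plus discounted continuation value, minus the information costs of the
player's policy `π` and the opponent's policy `σ` (convention `0·log 0 = 0` holds since
`Real.log 0 = 0`). -/
def freeEnergy (R : S → A → B → ℝ) (T : S → A → B → S → ℝ) (γ : ℝ)
    (ρpl : S → A → ℝ) (ρop : S → B → ℝ) (βpl βop : ℝ)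
    (π : A → ℝ) (σ : B → ℝ) (s : S) (V : S → ℝ) : ℝ :=
  (∑ a, ∑ b, π a * σ b * (R s a b + γ * ∑ s', T s a b s' * V s'))
    - (1 / βpl) * ∑ a, π a * Real.log (π a / ρpl s a)
    - (1 / βop) * ∑ b, σ b * Real.log (σ b / ρop s b)

/-- The extremum operator over the opponent's simplex: a supremum if `β_op > 0`
and an infimum if `β_op < 0`. -/
def extOp (βop : ℝ) (g : (B → ℝ) → ℝ) : ℝ :=
  if 0 < βop then sSup (g '' simplex B) else sInf (g '' simplex B)

/-- The player's soft Bellman operator `(B_pl V)(s) = sup_π ext_σ f(π, σ, s, V)`. -/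
def Bpl (R : S → A → B → ℝ) (T : S → A → B → S → ℝ) (γ : ℝ)
    (ρpl : S → A → ℝ) (ρop : S → B → ℝ) (βpl βop : ℝ) (V : S → ℝ) (s : S) : ℝ :=
  sSup ((fun π => extOp βop (fun σ => freeEnergy R T γ ρpl ρop βpl βop π σ s V)) '' simplex A)

/-- The opponent's soft Bellman operator `(B_op V)(s) = ext_σ sup_π f(π, σ, s, V)`. -/
def Bop (R : S → A → B → ℝ) (T : S → A → B → S → ℝ) (γ : ℝ)
    (ρpl : S → A → ℝ) (ρop : S → B → ℝ) (βpl βop : ℝ) (V : S → ℝ) (s : S) : ℝ :=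
  extOp βop (fun σ => sSup ((fun π => freeEnergy R T γ ρpl ρop βpl βop π σ s V) '' simplex A))

lemma simplex_nonempty (X : Type*) [Fintype X] [Nonempty X] : (simplex X).Nonempty := by
  refine ⟨fun _ => (Fintype.card X : ℝ)⁻¹, fun _ => by positivity, ?_⟩
  simp [Finset.card_univ, Fintype.card_ne_zero]

lemma isCompact_simplex (X : Type*) [Fintype X] : IsCompact (simplex X) :=
  isCompact_stdSimplex ℝ X

lemma abs_sum_mul_le_of_mem_simplex {X : Type*} [Fintype X] {p : X → ℝ} (hp : p ∈ simplex X)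
    {f : X → ℝ} {M : ℝ} (hf : ∀ x, |f x| ≤ M) : |∑ x, p x * f x| ≤ M :=
  calc |∑ x, p x * f x| ≤ ∑ x, p x * |f x| := by
        simpa only [abs_mul, abs_of_nonneg (hp.1 _)] using
          Finset.abs_sum_le_sum_abs (fun x => p x * f x) Finset.univ
    _ ≤ ∑ x, p x * M := Finset.sum_le_sum fun x _ => mul_le_mul_of_nonneg_left (hf x) (hp.1 x)
    _ = M := by rw [← Finset.sum_mul, hp.2, one_mul]

-- `x / 0 = 0` and `log 0 = 0` make the function identically zero when `c = 0`.
lemma continuous_mul_log_div (c : ℝ) : Continuous fun x : ℝ => x * Real.log (x / c) := by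
  rcases eq_or_ne c 0 with rfl | hc
  · simpa using continuous_const
  have : (fun x : ℝ => x * Real.log (x / c)) = fun x => x * Real.log x - x * Real.log c := by
    funext x
    rcases eq_or_ne x 0 with rfl | hx
    · simp
    · rw [Real.log_div hx hc]; ring
  rw [this]
  exact Real.continuous_mul_log.sub (continuous_id.mul continuous_const)

lemma csSup_image_le_csSup_image_add {X : Type*} {K : Set X} (hK : K.Nonempty)
    {g h : X → ℝ} {c : ℝ} (hh : BddAbove (h '' K)) (hgh : ∀ x ∈ K, g x ≤ h x + c) :
    sSup (g '' K) ≤ sSup (h '' K) + c := by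
  refine csSup_le (hK.image g) ?_
  rintro _ ⟨x, hx, rfl⟩
  exact (hgh x hx).trans (add_le_add_left (le_csSup hh ⟨x, hx, rfl⟩) c)

lemma csInf_image_le_csInf_image_add {X : Type*} {K : Set X} (hK : K.Nonempty)
    {g h : X → ℝ} {c : ℝ} (hg : BddBelow (g '' K)) (hgh : ∀ x ∈ K, g x ≤ h x + c) :
    sInf (g '' K) ≤ sInf (h '' K) + c := by
  rw [← sub_le_iff_le_add]
  refine le_csInf (hK.image h) ?_
  rintro _ ⟨x, hx, rfl⟩
  exact sub_le_iff_le_add.mpr ((csInf_le hg ⟨x, hx, rfl⟩).trans (hgh x hx))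

section extOp

variable [Nonempty B]

lemma extOp_le_extOp_add (βop : ℝ) {g h : (B → ℝ) → ℝ} {c : ℝ}
    (hg : BddBelow (g '' simplex B)) (hh : BddAbove (h '' simplex B))
    (hgh : ∀ σ ∈ simplex B, g σ ≤ h σ + c) :
    extOp βop g ≤ extOp βop h + c := by
  unfold extOp
  split_ifs
  · exact csSup_image_le_csSup_image_add (simplex_nonempty B) hh hgh
  · exact csInf_image_le_csInf_image_add (simplex_nonempty B) hg hgh

lemma abs_extOp_le (βop : ℝ) {g : (B → ℝ) → ℝ} {M : ℝ}
    (hg : ∀ σ ∈ simplex B, |g σ| ≤ M) : |extOp βop g| ≤ M := by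
  obtain ⟨σ₀, hσ₀⟩ := simplex_nonempty B
  have hIcc : g '' simplex B ⊆ Set.Icc (-M) M := by
    rintro _ ⟨σ, hσ, rfl⟩
    exact abs_le.mp (hg σ hσ)
  have hne : (g '' simplex B).Nonempty := ⟨g σ₀, σ₀, hσ₀, rfl⟩
  rw [abs_le]
  unfold extOp
  split_ifs
  · exact ⟨(hIcc ⟨σ₀, hσ₀, rfl⟩).1.trans (le_csSup (bddAbove_Icc.mono hIcc) ⟨σ₀, hσ₀, rfl⟩),
      csSup_le hne fun _ hx => (hIcc hx).2⟩
  · exact ⟨le_csInf hne fun _ hx => (hIcc hx).1,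
      (csInf_le (bddBelow_Icc.mono hIcc) ⟨σ₀, hσ₀, rfl⟩).trans (hIcc ⟨σ₀, hσ₀, rfl⟩).2⟩

end extOp

section freeEnergy

variable (R : S → A → B → ℝ) (T : S → A → B → S → ℝ) (γ : ℝ)
  (ρpl : S → A → ℝ) (ρop : S → B → ℝ) (βpl βop : ℝ)

lemma continuous_freeEnergy (s : S) (V : S → ℝ) :
    Continuous fun p : (A → ℝ) × (B → ℝ) => freeEnergy R T γ ρpl ρop βpl βop p.1 p.2 s V := by
  unfold freeEnergy
  refine .sub (.sub ?_ ?_) ?_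
  · exact continuous_finsetSum _ fun a _ => continuous_finsetSum _ fun b _ =>
      (((continuous_apply a).comp continuous_fst).mul
        ((continuous_apply b).comp continuous_snd)).mul continuous_const
  · exact continuous_const.mul (continuous_finsetSum _ fun a _ =>
      (continuous_mul_log_div _).comp ((continuous_apply a).comp continuous_fst))
  · exact continuous_const.mul (continuous_finsetSum _ fun b _ =>
      (continuous_mul_log_div _).comp ((continuous_apply b).comp continuous_snd))

lemma exists_abs_freeEnergy_le (s : S) (V : S → ℝ) : ∃ M, ∀ π ∈ simplex A, ∀ σ ∈ simplex B,
    |freeEnergy R T γ ρpl ρop βpl βop π σ s V| ≤ M := by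
  obtain ⟨M, hM⟩ := ((isCompact_simplex A).prod (isCompact_simplex B)).exists_bound_of_continuousOn
    (continuous_freeEnergy R T γ ρpl ρop βpl βop s V).continuousOn
  exact ⟨M, fun π hπ σ hσ => hM (π, σ) ⟨hπ, hσ⟩⟩

lemma freeEnergy_sub_freeEnergy (π : A → ℝ) (σ : B → ℝ) (s : S) (V W : S → ℝ) :
    freeEnergy R T γ ρpl ρop βpl βop π σ s V - freeEnergy R T γ ρpl ρop βpl βop π σ s W =
      ∑ a, π a * ∑ b, σ b * (γ * ∑ s', T s a b s' * (V s' - W s')) := by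
  rw [freeEnergy, freeEnergy, sub_sub_sub_cancel_right, sub_sub_sub_cancel_right,
    ← Finset.sum_sub_distrib]
  refine Finset.sum_congr rfl fun a _ => ?_
  rw [← Finset.sum_sub_distrib, Finset.mul_sum]
  refine Finset.sum_congr rfl fun b _ => ?_
  simp only [mul_sub, Finset.sum_sub_distrib]
  ring

variable {T γ}

lemma abs_freeEnergy_sub_freeEnergy_le (hγ : 0 ≤ γ) (hT : ∀ s a b, T s a b ∈ simplex S)
    {π : A → ℝ} (hπ : π ∈ simplex A) {σ : B → ℝ} (hσ : σ ∈ simplex B) (s : S) (V W : S → ℝ) :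
    |freeEnergy R T γ ρpl ρop βpl βop π σ s V - freeEnergy R T γ ρpl ρop βpl βop π σ s W| ≤
      γ * dist V W := by
  rw [freeEnergy_sub_freeEnergy]
  refine abs_sum_mul_le_of_mem_simplex hπ fun a => abs_sum_mul_le_of_mem_simplex hσ fun b => ?_
  rw [abs_mul, abs_of_nonneg hγ]
  refine mul_le_mul_of_nonneg_left (abs_sum_mul_le_of_mem_simplex (hT s a b) fun s' => ?_) hγ
  exact (Real.dist_eq (V s') (W s')).symm.le.trans (dist_le_pi_dist V W s')

variable [Nonempty A] [Nonempty B]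

lemma Bpl_le_Bpl_add_mul_dist (hγ : 0 ≤ γ) (hT : ∀ s a b, T s a b ∈ simplex S)
    (V W : S → ℝ) (s : S) :
    Bpl R T γ ρpl ρop βpl βop V s ≤ Bpl R T γ ρpl ρop βpl βop W s + γ * dist V W := by
  obtain ⟨MV, hMV⟩ := exists_abs_freeEnergy_le R T γ ρpl ρop βpl βop s V
  obtain ⟨MW, hMW⟩ := exists_abs_freeEnergy_le R T γ ρpl ρop βpl βop s W
  refine csSup_image_le_csSup_image_add (simplex_nonempty A) ?_ fun π hπ => ?_
  · refine ⟨MW, ?_⟩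
    rintro _ ⟨π, hπ, rfl⟩
    exact (abs_le.mp (abs_extOp_le βop (hMW π hπ))).2
  refine extOp_le_extOp_add βop ?_ ?_ fun σ hσ => ?_
  · exact ⟨-MV, by rintro _ ⟨σ, hσ, rfl⟩; exact (abs_le.mp (hMV π hπ σ hσ)).1⟩
  · exact ⟨MW, by rintro _ ⟨σ, hσ, rfl⟩; exact (abs_le.mp (hMW π hπ σ hσ)).2⟩
  · linarith [(abs_sub_le_iff.mp
      (abs_freeEnergy_sub_freeEnergy_le R ρpl ρop βpl βop hγ hT hπ hσ s V W)).1]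

lemma contractingWith_Bpl (hγ0 : 0 ≤ γ) (hγ1 : γ < 1) (hT : ∀ s a b, T s a b ∈ simplex S) :
    ContractingWith γ.toNNReal (Bpl R T γ ρpl ρop βpl βop) := by
  refine ⟨by simpa using hγ1, LipschitzWith.of_dist_le_mul fun V W => ?_⟩
  rw [Real.coe_toNNReal γ hγ0, dist_pi_le_iff (by positivity)]
  intro s
  rw [Real.dist_eq, abs_sub_le_iff]
  exact ⟨sub_le_iff_le_add'.mpr (Bpl_le_Bpl_add_mul_dist R ρpl ρop βpl βop hγ0 hT V W s),
    sub_le_iff_le_add'.mpr (dist_comm V W ▸ Bpl_le_Bpl_add_mul_dist R ρpl ρop βpl βop hγ0 hT W V s)⟩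

end freeEnergy

theorem Bpl_existsUnique_fixedPoint_general [Nonempty A] [Nonempty B]
    (R : S → A → B → ℝ) (T : S → A → B → S → ℝ) (γ : ℝ) (hγ0 : 0 ≤ γ) (hγ1 : γ < 1)
    (hT0 : ∀ s a b s', 0 ≤ T s a b s') (hT1 : ∀ s a b, ∑ s', T s a b s' = 1)
    (ρpl : S → A → ℝ) (ρop : S → B → ℝ)
    (βpl βop : ℝ) :
    ∃! Vstar : S → ℝ, ∀ s, Bpl R T γ ρpl ρop βpl βop Vstar s = Vstar s := by
  have hc := contractingWith_Bpl R ρpl ρop βpl βop hγ0 hγ1 fun s a b => ⟨hT0 s a b, hT1 s a b⟩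
  exact ⟨hc.fixedPoint _, congrFun hc.fixedPoint_isFixedPt,
    fun V hV => hc.fixedPoint_unique (funext hV)⟩

/-- (Corollary 1, Unique fixed point) For nonzero `β_pl`, `β_op`, the soft Bellman
operator `B_pl` has a unique fixed point `V* : S → ℝ`. -/
theorem Bpl_existsUnique_fixedPoint [Nonempty S] [Nonempty A] [Nonempty B]
    (R : S → A → B → ℝ) (T : S → A → B → S → ℝ) (γ : ℝ) (hγ0 : 0 ≤ γ) (hγ1 : γ < 1)
    (hT0 : ∀ s a b s', 0 ≤ T s a b s') (hT1 : ∀ s a b, ∑ s', T s a b s' = 1)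
    (ρpl : S → A → ℝ) (ρop : S → B → ℝ)
    (hρpl : ∀ s a, 0 < ρpl s a) (hρpl1 : ∀ s, ∑ a, ρpl s a = 1)
    (hρop : ∀ s b, 0 < ρop s b) (hρop1 : ∀ s, ∑ b, ρop s b = 1)
    (βpl βop : ℝ) (hβpl : βpl ≠ 0) (hβop : βop ≠ 0) :
    ∃! Vstar : S → ℝ, ∀ s, Bpl R T γ ρpl ρop βpl βop Vstar s = Vstar s :=
  Bpl_existsUnique_fixedPoint_general R T γ hγ0 hγ1 hT0 hT1 ρpl ρop βpl βop
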